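/- arXiv:2102.10166 — 6 statements merged into one kernel-verified Lean document; each statement's English description precedes it below -/
import Mathlib

section
/- Suppose H > 1/2 and bc ≥ 0, or H < 1/2 and bc ≤ 0. Then for all 0 ≤ s < t, a²(t-s) + (b² + c² - 2bc(2^{2H-1}-1))(t-s)^{2H} ≤ α(t,s) ≤ a²(t-s) + (b²+c²)(t-s)^{2H}, where α(t,s) = a²(t-s) - 2^{2H}bc(t^{2H}+s^{2H}) + (b²+c²)(t-s)^{2H} + 2bc(t+s)^{2H}. -/
/-!
With `γ = 2H`, the increment variance is
`a²(t-s) + (b²+c²)(t-s)^γ - 2bc·G(t,s)` for the power-mean gap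
`G(t,s) = 2^(γ-1)(t^γ + s^γ) - (t+s)^γ`, so both bounds follow from
`0 ≤ (γ-1)·G(t,s) ≤ (γ-1)(2^(γ-1) - 1)(t-s)^γ`, the sign hypothesis on `bc` matching that of `γ-1`.
The left inequality is midpoint convexity (`γ ≥ 1`) or concavity (`γ ≤ 1`) of `x ↦ x^γ`.
For the right one, fix `s` and differentiate in `u = t - s`: since `(2u+2s)^β = 2^β(u+s)^β`
with `β = γ - 1`, the derivative is `γ` times the drop of `x ↦ β((x+2s)^β - x^β)` from `x = u`
to `x = 2u`, and this function is antitone because `β ≤ 1`.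
-/

open Real Set

lemma antitoneOn_mul_add_rpow_sub_rpow {β h : ℝ} (hβ : β ≤ 1) (hh : 0 ≤ h) :
    AntitoneOn (fun x : ℝ => β * ((x + h) ^ β - x ^ β)) (Ioi 0) := by
  have hderiv : ∀ x ∈ Ioi (0 : ℝ), HasDerivAt (fun x : ℝ => β * ((x + h) ^ β - x ^ β))
      (β * (β * (x + h) ^ (β - 1) - β * x ^ (β - 1))) x := fun x (hx : 0 < x) => by
    have hxh := ((hasDerivAt_id x).add_const h).rpow_const (p := β) (Or.inl (by positivity))
    rw [one_mul] at hxh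
    exact (hxh.sub (hasDerivAt_rpow_const (Or.inl hx.ne'))).const_mul β
  refine antitoneOn_of_hasDerivWithinAt_nonpos (convex_Ioi 0)
    (continuousOn_of_forall_continuousAt fun x hx => (hderiv x hx).continuousAt)
    (fun x hx => (hderiv x (interior_subset hx)).hasDerivWithinAt) fun x hx => ?_
  rw [interior_Ioi] at hx
  have hle : (x + h) ^ (β - 1) ≤ x ^ (β - 1) :=
    rpow_le_rpow_of_nonpos hx (by linarith) (by linarith)
  calc β * (β * (x + h) ^ (β - 1) - β * x ^ (β - 1))
      = β ^ 2 * ((x + h) ^ (β - 1) - x ^ (β - 1)) := by ring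
    _ ≤ 0 := mul_nonpos_of_nonneg_of_nonpos (sq_nonneg β) (by linarith)

lemma rpow_add_le_two_rpow_sub_one_mul {p x y : ℝ} (hp : 1 ≤ p) (hx : 0 ≤ x) (hy : 0 ≤ y) :
    (x + y) ^ p ≤ 2 ^ (p - 1) * (x ^ p + y ^ p) := by
  exact_mod_cast NNReal.rpow_add_le_mul_rpow_add_rpow ⟨x, hx⟩ ⟨y, hy⟩ hp

lemma two_rpow_sub_one_mul_le_rpow_add {p x y : ℝ} (hp₀ : 0 ≤ p) (hp₁ : p ≤ 1)
    (hx : 0 ≤ x) (hy : 0 ≤ y) :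
    2 ^ (p - 1) * (x ^ p + y ^ p) ≤ (x + y) ^ p := by
  have hmid := (concaveOn_rpow hp₀ hp₁).2 (mem_Ici.2 hx) (mem_Ici.2 hy)
    (by norm_num : (0 : ℝ) ≤ 1 / 2) (by norm_num : (0 : ℝ) ≤ 1 / 2) (by norm_num)
  simp only [smul_eq_mul] at hmid
  have hsplit : (x + y) ^ p = 2 ^ p * (1 / 2 * x + 1 / 2 * y) ^ p := by
    rw [← mul_rpow (by norm_num) (by positivity)]; ring_nf
  rw [hsplit, rpow_sub_one two_ne_zero]
  have h2p : (0 : ℝ) ≤ 2 ^ p := by positivity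
  nlinarith

noncomputable def powerMeanGap (γ t s : ℝ) : ℝ := 2 ^ (γ - 1) * (t ^ γ + s ^ γ) - (t + s) ^ γ

lemma powerMeanGap_self {γ s : ℝ} (hs : 0 ≤ s) : powerMeanGap γ s s = 0 := by
  rw [powerMeanGap, ← two_mul s, mul_rpow zero_le_two hs, rpow_sub_one two_ne_zero]
  ring

lemma monotoneOn_sub_one_mul_sub_powerMeanGap {γ s : ℝ} (hγ₀ : 0 < γ) (hγ₂ : γ ≤ 2)
    (hs : 0 ≤ s) :
    MonotoneOn (fun u => (γ - 1) * ((2 ^ (γ - 1) - 1) * u ^ γ - powerMeanGap γ (u + s) s))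
      (Ici 0) := by
  have hderiv : ∀ u ∈ Ioi (0 : ℝ),
      HasDerivAt (fun u => (γ - 1) * ((2 ^ (γ - 1) - 1) * u ^ γ - powerMeanGap γ (u + s) s))
        (γ * ((γ - 1) * ((u + 2 * s) ^ (γ - 1) - u ^ (γ - 1))
          - (γ - 1) * (2 ^ (γ - 1) * (u + s) ^ (γ - 1) - 2 ^ (γ - 1) * u ^ (γ - 1)))) u := by
    intro u (hu : 0 < u)
    have hus := ((hasDerivAt_id u).add_const s).rpow_const (p := γ) (Or.inl (by positivity))
    have hu2s := (((hasDerivAt_id u).add_const s).add_const s).rpow_const (p := γ)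
      (Or.inl (by positivity))
    have hpow := hasDerivAt_rpow_const (p := γ) (Or.inl hu.ne')
    refine (((hpow.const_mul (2 ^ (γ - 1) - 1)).sub (((hus.add_const (s ^ γ)).const_mul
      (2 ^ (γ - 1))).sub hu2s)).const_mul (γ - 1)).congr_deriv ?_
    simp only [id, one_mul, add_assoc, ← two_mul s]
    ring
  refine monotoneOn_of_hasDerivWithinAt_nonneg (convex_Ici 0) ?cont
    (fun u hu => (hderiv u (by simpa using hu)).hasDerivWithinAt) fun u hu => ?_
  case cont =>
    unfold powerMeanGap
    exact continuousOn_of_forall_continuousAt fun x hx => by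
      have : (0 : ℝ) ≤ x := hx
      fun_prop (disch := positivity)
  rw [interior_Ici] at hu
  have hu : (0 : ℝ) < u := hu
  have hanti := antitoneOn_mul_add_rpow_sub_rpow (show γ - 1 ≤ 1 by linarith)
    (show 0 ≤ 2 * s by positivity) (mem_Ioi.2 hu) (mem_Ioi.2 (by positivity : (0 : ℝ) < 2 * u))
    (by linarith)
  simp only [show 2 * u + 2 * s = 2 * (u + s) by ring, mul_rpow zero_le_two hu.le,
    mul_rpow zero_le_two (by positivity : 0 ≤ u + s)] at hanti
  exact mul_nonneg hγ₀.le (by linarith)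

lemma sub_one_mul_powerMeanGap_nonneg {γ t s : ℝ} (hγ : 0 ≤ γ) (ht : 0 ≤ t) (hs : 0 ≤ s) :
    0 ≤ (γ - 1) * powerMeanGap γ t s := by
  rcases le_total 1 γ with hγ₁ | hγ₁
  · exact mul_nonneg (by linarith) (sub_nonneg.2 (rpow_add_le_two_rpow_sub_one_mul hγ₁ ht hs))
  · exact mul_nonneg_of_nonpos_of_nonpos (by linarith)
      (sub_nonpos.2 (two_rpow_sub_one_mul_le_rpow_add hγ hγ₁ ht hs))

lemma sub_one_mul_powerMeanGap_le {γ s t : ℝ} (hγ₀ : 0 < γ) (hγ₂ : γ ≤ 2) (hs : 0 ≤ s)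
    (hst : s ≤ t) :
    (γ - 1) * powerMeanGap γ t s ≤ (γ - 1) * ((2 ^ (γ - 1) - 1) * (t - s) ^ γ) := by
  have hmono := monotoneOn_sub_one_mul_sub_powerMeanGap hγ₀ hγ₂ hs self_mem_Ici
    (sub_nonneg.2 hst) (sub_nonneg.2 hst)
  simp only [zero_add, sub_add_cancel, powerMeanGap_self hs, zero_rpow hγ₀.ne'] at hmono
  linarith

/-- Two-sided bound for the increment variance of the mgfBm, first case. -/
theorem mgfBm_increment_bounds_case1 (H a b c : ℝ) (hH : H ∈ Set.Ioo (0 : ℝ) 1)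
    (hcase : (1 / 2 < H ∧ 0 ≤ b * c) ∨ (H < 1 / 2 ∧ b * c ≤ 0)) :
    ∀ s t : ℝ, 0 ≤ s → s < t →
      a ^ 2 * (t - s) + (b ^ 2 + c ^ 2 - 2 * b * c * (2 ^ (2 * H - 1) - 1)) * (t - s) ^ (2 * H)
        ≤ a ^ 2 * (t - s) - 2 ^ (2 * H) * b * c * (t ^ (2 * H) + s ^ (2 * H))
            + (b ^ 2 + c ^ 2) * (t - s) ^ (2 * H) + 2 * b * c * (t + s) ^ (2 * H) ∧
      a ^ 2 * (t - s) - 2 ^ (2 * H) * b * c * (t ^ (2 * H) + s ^ (2 * H))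
          + (b ^ 2 + c ^ 2) * (t - s) ^ (2 * H) + 2 * b * c * (t + s) ^ (2 * H)
        ≤ a ^ 2 * (t - s) + (b ^ 2 + c ^ 2) * (t - s) ^ (2 * H) := by
  intro s t hs hst
  obtain ⟨hH₀, hH₁⟩ := hH
  have hgap := sub_one_mul_powerMeanGap_nonneg (γ := 2 * H) (by linarith) (hs.trans hst.le) hs
  have hgap_le := sub_one_mul_powerMeanGap_le (γ := 2 * H) (by linarith) (by linarith) hs hst.le
  have hsign : ∀ X : ℝ, 0 ≤ (2 * H - 1) * X → 0 ≤ b * c * X := by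
    intro X hX
    rcases hcase with ⟨hH, hbc⟩ | ⟨hH, hbc⟩
    · exact mul_nonneg hbc (nonneg_of_mul_nonneg_right hX (by linarith))
    · exact mul_nonneg_of_nonpos_of_nonpos hbc (nonpos_of_mul_nonneg_right hX (by linarith))
  have hlow := hsign _ (by rw [mul_sub]; exact sub_nonneg.2 hgap_le)
  have hup := hsign _ hgap
  rw [powerMeanGap, rpow_sub_one two_ne_zero] at hlow hup
  rw [rpow_sub_one two_ne_zero]
  exact ⟨by linear_combination 2 * hlow, by linear_combination 2 * hup⟩
end

section
/- Suppose H > 1/2 and bc ≤ 0, or H < 1/2 and bc ≥ 0. Then for all 0 ≤ s < t, a²(t-s) + (b²+c²)(t-s)^{2H} ≤ α(t,s) ≤ a²(t-s) + (b² + c² - 2bc(2^{2H-1}-1))(t-s)^{2H}, where α(t,s) = a²(t-s) - 2^{2H}bc(t^{2H}+s^{2H}) + (b²+c²)(t-s)^{2H} + 2bc(t+s)^{2H}. -/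
/-!
Write `γ = 2H` and `J_p(x, y) = 2^p (x^p + y^p) - 2 (x + y)^p`, so that
`α(t, s) = a²(t - s) + (b² + c²)(t - s)^γ - bc J_γ(t, s)`.
The sign of `J_γ(t, s)` is midpoint convexity (`γ ≥ 1`) or concavity (`γ ≤ 1`) of `x ↦ x^γ`,
which gives the lower bound. For the upper bound fix `d = t - s`: then
`∂ₛ J_p(s + d, s) = 2p J_{p-1}(s + d, s)`, whose sign is that of the Jensen gap of `x ↦ x^(p-1)`.
Hence `s ↦ J_γ(s + d, s)` is monotone on `[0, ∞)`, and `J_γ(t, s)` is compared with its value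
`(2^γ - 2) d^γ` at `s = 0`.
-/

open Real Set

lemma convexOn_rpow_of_nonpos {p : ℝ} (hp : p ≤ 0) : ConvexOn ℝ (Ioi 0) fun x : ℝ ↦ x ^ p := by
  have hderiv (q : ℝ) {x : ℝ} (hx : x ∈ Ioi 0) :
      HasDerivAt (fun x : ℝ ↦ x ^ q) (q * x ^ (q - 1)) x :=
    hasDerivAt_rpow_const (Or.inl (ne_of_gt hx))
  refine convexOn_of_hasDerivWithinAt2_nonneg (convex_Ioi 0)
    (fun x hx ↦ (hderiv p hx).continuousAt.continuousWithinAt)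
    (f' := fun x ↦ p * x ^ (p - 1)) (f'' := fun x ↦ p * ((p - 1) * x ^ (p - 1 - 1)))
    (fun x hx ↦ ?_) (fun x hx ↦ ?_) (fun x hx ↦ ?_)
  all_goals rw [interior_Ioi] at hx
  · exact (hderiv p hx).hasDerivWithinAt
  · exact ((hderiv (p - 1) hx).const_mul p).hasDerivWithinAt
  · exact mul_nonneg_of_nonpos_of_nonpos hp
      (mul_nonpos_of_nonpos_of_nonneg (by linarith) (rpow_nonneg (le_of_lt hx) _))

/-- `2 ^ (p + 1)` times the gap in the midpoint Jensen inequality for `x ↦ x ^ p`. -/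
noncomputable def rpowJensenGap (p x y : ℝ) : ℝ := 2 ^ p * (x ^ p + y ^ p) - 2 * (x + y) ^ p

section rpowJensenGap

variable {p x y : ℝ}

lemma rpowJensenGap_eq_two_rpow_mul (hx : 0 ≤ x) (hy : 0 ≤ y) :
    rpowJensenGap p x y = 2 ^ p * (x ^ p + y ^ p - 2 * ((x + y) / 2) ^ p) := by
  rw [rpowJensenGap, div_rpow (by positivity) zero_le_two]
  field_simp

lemma rpowJensenGap_nonneg_of_convexOn {s : Set ℝ} (hs : s ⊆ Ici 0)
    (hconv : ConvexOn ℝ s fun x : ℝ ↦ x ^ p) (hx : x ∈ s) (hy : y ∈ s) :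
    0 ≤ rpowJensenGap p x y := by
  have := hconv.2 hx hy (by norm_num : (0 : ℝ) ≤ 1 / 2) (by norm_num : (0 : ℝ) ≤ 1 / 2)
    (by norm_num)
  rw [rpowJensenGap_eq_two_rpow_mul (hs hx) (hs hy)]
  simp only [smul_eq_mul, one_div_mul_eq_div, ← add_div] at this
  exact mul_nonneg (by positivity) (by linarith)

lemma rpowJensenGap_nonpos_of_concaveOn {s : Set ℝ} (hs : s ⊆ Ici 0)
    (hconc : ConcaveOn ℝ s fun x : ℝ ↦ x ^ p) (hx : x ∈ s) (hy : y ∈ s) :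
    rpowJensenGap p x y ≤ 0 := by
  have := hconc.2 hx hy (by norm_num : (0 : ℝ) ≤ 1 / 2) (by norm_num : (0 : ℝ) ≤ 1 / 2)
    (by norm_num)
  rw [rpowJensenGap_eq_two_rpow_mul (hs hx) (hs hy)]
  simp only [smul_eq_mul, one_div_mul_eq_div, ← add_div] at this
  exact mul_nonpos_of_nonneg_of_nonpos (by positivity) (by linarith)

lemma rpowJensenGap_zero_right (hp : p ≠ 0) (x : ℝ) :
    rpowJensenGap p x 0 = (2 ^ p - 2) * x ^ p := by
  rw [rpowJensenGap, zero_rpow hp, add_zero, add_zero]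
  ring

lemma hasDerivAt_rpowJensenGap_shift {d s : ℝ} (hd : 0 ≤ d) (hs : 0 < s) :
    HasDerivAt (fun s ↦ rpowJensenGap p (s + d) s)
      (2 * p * rpowJensenGap (p - 1) (s + d) s) s := by
  have h₁ := ((hasDerivAt_id' s).add_const d).rpow_const (p := p) (Or.inl (by linarith))
  have h₂ := (hasDerivAt_id' s).rpow_const (p := p) (Or.inl hs.ne')
  have h₃ := (((hasDerivAt_id' s).add_const d).fun_add (hasDerivAt_id' s)).rpow_const (p := p)
    (Or.inl (by linarith))
  refine (((h₁.fun_add h₂).const_mul (2 ^ p)).fun_sub (h₃.const_mul 2)).congr_deriv ?_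
  rw [rpowJensenGap, rpow_sub_one two_ne_zero]
  ring

lemma continuous_rpowJensenGap_shift (hp : 0 ≤ p) (d : ℝ) :
    Continuous fun s ↦ rpowJensenGap p (s + d) s := by
  unfold rpowJensenGap
  have := continuous_rpow_const hp
  fun_prop

lemma antitoneOn_rpowJensenGap_shift (hp₁ : 1 ≤ p) (hp₂ : p ≤ 2) {d : ℝ} (hd : 0 ≤ d) :
    AntitoneOn (fun s ↦ rpowJensenGap p (s + d) s) (Ici 0) := by
  refine antitoneOn_of_hasDerivWithinAt_nonpos (convex_Ici 0)
    (f' := fun s ↦ 2 * p * rpowJensenGap (p - 1) (s + d) s)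
    (continuous_rpowJensenGap_shift (by linarith) d).continuousOn
    (fun s hs ↦ ?_) (fun s hs ↦ ?_)
  all_goals rw [interior_Ici, mem_Ioi] at hs
  · exact (hasDerivAt_rpowJensenGap_shift hd hs).hasDerivWithinAt
  · have := rpowJensenGap_nonpos_of_concaveOn le_rfl
      (concaveOn_rpow (p := p - 1) (by linarith) (by linarith))
      (add_nonneg hs.le hd) hs.le
    exact mul_nonpos_of_nonneg_of_nonpos (by linarith) this

lemma monotoneOn_rpowJensenGap_shift (hp₀ : 0 ≤ p) (hp₁ : p ≤ 1) {d : ℝ} (hd : 0 ≤ d) :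
    MonotoneOn (fun s ↦ rpowJensenGap p (s + d) s) (Ici 0) := by
  refine monotoneOn_of_hasDerivWithinAt_nonneg (convex_Ici 0)
    (f' := fun s ↦ 2 * p * rpowJensenGap (p - 1) (s + d) s)
    (continuous_rpowJensenGap_shift hp₀ d).continuousOn
    (fun s hs ↦ ?_) (fun s hs ↦ ?_)
  all_goals rw [interior_Ici, mem_Ioi] at hs
  · exact (hasDerivAt_rpowJensenGap_shift hd hs).hasDerivWithinAt
  · have := rpowJensenGap_nonneg_of_convexOn Ioi_subset_Ici_self
      (convexOn_rpow_of_nonpos (p := p - 1) (by linarith))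
      (add_pos_of_pos_of_nonneg hs hd) hs
    exact mul_nonneg (by linarith) this

lemma rpowJensenGap_le_of_one_le {s t : ℝ} (hp₁ : 1 ≤ p) (hp₂ : p ≤ 2) (hs : 0 ≤ s)
    (hst : s ≤ t) : rpowJensenGap p t s ≤ (2 ^ p - 2) * (t - s) ^ p := by
  have : rpowJensenGap p (s + (t - s)) s ≤ rpowJensenGap p (0 + (t - s)) 0 :=
    antitoneOn_rpowJensenGap_shift hp₁ hp₂ (sub_nonneg.2 hst) self_mem_Ici hs hs
  rwa [add_sub_cancel, zero_add, rpowJensenGap_zero_right (by linarith)] at this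

lemma le_rpowJensenGap_of_le_one {s t : ℝ} (hp₀ : 0 < p) (hp₁ : p ≤ 1) (hs : 0 ≤ s)
    (hst : s ≤ t) : (2 ^ p - 2) * (t - s) ^ p ≤ rpowJensenGap p t s := by
  have : rpowJensenGap p (0 + (t - s)) 0 ≤ rpowJensenGap p (s + (t - s)) s :=
    monotoneOn_rpowJensenGap_shift hp₀.le hp₁ (sub_nonneg.2 hst) self_mem_Ici hs hs
  rwa [add_sub_cancel, zero_add, rpowJensenGap_zero_right hp₀.ne'] at this

end rpowJensenGap

/-- Two-sided bound for the increment variance of the mgfBm, second case. -/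
theorem mgfBm_increment_bounds_case2 (H a b c : ℝ) (hH : H ∈ Set.Ioo (0 : ℝ) 1)
    (hcase : (1 / 2 < H ∧ b * c ≤ 0) ∨ (H < 1 / 2 ∧ 0 ≤ b * c)) :
    ∀ s t : ℝ, 0 ≤ s → s < t →
      a ^ 2 * (t - s) + (b ^ 2 + c ^ 2) * (t - s) ^ (2 * H)
        ≤ a ^ 2 * (t - s) - 2 ^ (2 * H) * b * c * (t ^ (2 * H) + s ^ (2 * H))
            + (b ^ 2 + c ^ 2) * (t - s) ^ (2 * H) + 2 * b * c * (t + s) ^ (2 * H) ∧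
      a ^ 2 * (t - s) - 2 ^ (2 * H) * b * c * (t ^ (2 * H) + s ^ (2 * H))
          + (b ^ 2 + c ^ 2) * (t - s) ^ (2 * H) + 2 * b * c * (t + s) ^ (2 * H)
        ≤ a ^ 2 * (t - s)
            + (b ^ 2 + c ^ 2 - 2 * b * c * (2 ^ (2 * H - 1) - 1)) * (t - s) ^ (2 * H) := by
  obtain ⟨hH₀, hH₁⟩ := hH
  intro s t hs hst
  have ht : t ∈ Ici (0 : ℝ) := hs.trans hst.le
  have hbounds : b * c * ((2 ^ (2 * H) - 2) * (t - s) ^ (2 * H))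
      ≤ b * c * rpowJensenGap (2 * H) t s ∧ b * c * rpowJensenGap (2 * H) t s ≤ 0 := by
    rcases hcase with ⟨hH, hbc⟩ | ⟨hH, hbc⟩
    · exact ⟨mul_le_mul_of_nonpos_left
          (rpowJensenGap_le_of_one_le (by linarith) (by linarith) hs hst.le) hbc,
        mul_nonpos_of_nonpos_of_nonneg hbc
          (rpowJensenGap_nonneg_of_convexOn le_rfl (convexOn_rpow (by linarith)) ht hs)⟩
    · exact ⟨mul_le_mul_of_nonneg_left
          (le_rpowJensenGap_of_le_one (by linarith) (by linarith) hs hst.le) hbc,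
        mul_nonpos_of_nonneg_of_nonpos hbc (rpowJensenGap_nonpos_of_concaveOn le_rfl
          (concaveOn_rpow (by linarith) (by linarith)) ht hs)⟩
  rw [rpow_sub_one two_ne_zero]
  unfold rpowJensenGap at hbounds
  exact ⟨by linear_combination hbounds.2, by linear_combination hbounds.1⟩
end

section
/- Let H ∈ (1/2, 1) and b ≠ c. Define R_M(p,p+n) = ((b²+c²)/2)((n+1)^{2H} - 2n^{2H} + (n-1)^{2H}) - bc((2p+n+2)^{2H} - 2(2p+n+1)^{2H} + (2p+n)^{2H}) for integers p,n ≥ 1. Then for every fixed p ≥ 1, R_M(p,p+n) ~ H(2H-1)(b-c)² n^{2H-2} as n → ∞, and the series Σ_{n≥1} R_M(p,p+n) diverges. -/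
/-!
Write `Δ_a(x) = (x + 1)^a - 2x^a + (x - 1)^a` with `a = 2H ∈ (1, 2)`. Then
`R(p, p + n) = (b² + c²)/2 · Δ_a(n) - bc · Δ_a(n + 2p + 1)`. Applying the mean value theorem
twice gives `Δ_a(x) = a(a - 1) η^(a - 2)` for some `η ∈ (x - 1, x + 1)`, so
`Δ_a(x + k) ~ a(a - 1) x^(a - 2)` for every shift `k`, and the two terms combine to
`((b² + c²)/2 - bc) · a(a - 1) n^(a - 2) = H(2H - 1)(b - c)² n^(2H - 2)`.
The same bounds make `Δ_a` decrease along steps of length `2`, hence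
`R(p, p + n) ≥ (b - c)²/2 · Δ_a(n + 2p + 1) ≥ C / n` with `C > 0` because `b ≠ c`,
and the series diverges by comparison with the harmonic series.
-/

open Filter Set Real

lemma exists_rpow_sub_rpow_eq (r : ℝ) {x y : ℝ} (hx : 0 < x) (hxy : x < y) :
    ∃ ξ ∈ Ioo x y, y ^ r - x ^ r = r * ξ ^ (r - 1) * (y - x) := by
  obtain ⟨ξ, hξ, h⟩ := exists_hasDerivAt_eq_slope (fun t => t ^ r)
    (fun t => r * t ^ (r - 1)) hxy
    (continuousOn_id.rpow_const fun t ht => Or.inl (hx.trans_le ht.1).ne')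
    (fun t ht => hasDerivAt_rpow_const (Or.inl (hx.trans ht.1).ne'))
  exact ⟨ξ, hξ, by rw [h, div_mul_cancel₀ _ (sub_ne_zero.2 hxy.ne')]⟩

noncomputable def rpowSecondDiff (a x : ℝ) : ℝ := (x + 1) ^ a - 2 * x ^ a + (x - 1) ^ a

lemma exists_rpowSecondDiff_eq {a x : ℝ} (ha : 0 < a) (hx : 1 ≤ x) :
    ∃ η ∈ Ioo (x - 1) (x + 1), rpowSecondDiff a x = a * (a - 1) * η ^ (a - 2) := by
  obtain ⟨ξ, hξ, h⟩ := exists_hasDerivAt_eq_slope (fun t => (t + 1) ^ a - t ^ a)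
    (fun t => 1 * a * (t + 1) ^ (a - 1) - 1 * a * t ^ (a - 1)) (sub_one_lt x)
    (((continuousOn_id.add continuousOn_const).rpow_const fun _ _ => Or.inr ha.le).sub
      (continuousOn_id.rpow_const fun _ _ => Or.inr ha.le))
    (fun t ht => (((hasDerivAt_id' t).add_const 1).rpow_const
        (Or.inl (by linarith [ht.1]))).sub
      ((hasDerivAt_id' t).rpow_const (Or.inl (by linarith [ht.1]))))
  have hξ0 : 0 < ξ := by linarith [hξ.1]
  obtain ⟨η, hη, h'⟩ := exists_rpow_sub_rpow_eq (a - 1) hξ0 (lt_add_one ξ)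
  refine ⟨η, ⟨by linarith [hη.1, hξ.1], by linarith [hη.2, hξ.2]⟩, ?_⟩
  rw [sub_sub_cancel, div_one, sub_add_cancel] at h
  calc rpowSecondDiff a x = a * ((ξ + 1) ^ (a - 1) - ξ ^ (a - 1)) := by
        rw [rpowSecondDiff]; linarith
    _ = a * (a - 1) * η ^ (a - 2) := by rw [h']; ring_nf

section Bounds

variable {a : ℝ} (ha₁ : 1 ≤ a) (ha₂ : a ≤ 2)
include ha₁ ha₂

lemma mul_rpow_add_one_le_rpowSecondDiff {x : ℝ} (hx : 1 ≤ x) :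
    a * (a - 1) * (x + 1) ^ (a - 2) ≤ rpowSecondDiff a x := by
  obtain ⟨η, hη, h⟩ := exists_rpowSecondDiff_eq (a := a) (by linarith) hx
  rw [h]
  have hη₀ : 0 < η := by linarith [hη.1]
  exact mul_le_mul_of_nonneg_left (rpow_le_rpow_of_nonpos hη₀ hη.2.le (by linarith))
    (by nlinarith)

lemma rpowSecondDiff_le_mul_rpow_sub_one {x : ℝ} (hx : 1 < x) :
    rpowSecondDiff a x ≤ a * (a - 1) * (x - 1) ^ (a - 2) := by
  obtain ⟨η, hη, h⟩ := exists_rpowSecondDiff_eq (a := a) (by linarith) hx.le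
  rw [h]
  exact mul_le_mul_of_nonneg_left (rpow_le_rpow_of_nonpos (sub_pos.2 hx) hη.1.le (by linarith))
    (by nlinarith)

lemma rpowSecondDiff_le_of_add_two_le {x y : ℝ} (hx : 1 ≤ x) (hxy : x + 2 ≤ y) :
    rpowSecondDiff a y ≤ rpowSecondDiff a x :=
  calc rpowSecondDiff a y ≤ a * (a - 1) * (y - 1) ^ (a - 2) :=
        rpowSecondDiff_le_mul_rpow_sub_one ha₁ ha₂ (by linarith)
    _ ≤ a * (a - 1) * (x + 1) ^ (a - 2) :=
        mul_le_mul_of_nonneg_left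
          (rpow_le_rpow_of_nonpos (by linarith) (by linarith) (by linarith)) (by nlinarith)
    _ ≤ rpowSecondDiff a x := mul_rpow_add_one_le_rpowSecondDiff ha₁ ha₂ hx

lemma mul_div_add_one_le_rpowSecondDiff {x : ℝ} (hx : 1 ≤ x) :
    a * (a - 1) / (x + 1) ≤ rpowSecondDiff a x :=
  calc a * (a - 1) / (x + 1) = a * (a - 1) * (x + 1) ^ (-1 : ℝ) := by
        rw [rpow_neg_one, div_eq_mul_inv]
    _ ≤ a * (a - 1) * (x + 1) ^ (a - 2) := by
        gcongr
        · nlinarith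
        · linarith
    _ ≤ rpowSecondDiff a x := mul_rpow_add_one_le_rpowSecondDiff ha₁ ha₂ hx

lemma sq_sub_div_two_mul_rpowSecondDiff_le (b c : ℝ) {x y : ℝ} (hx : 1 ≤ x)
    (hxy : x + 2 ≤ y) :
    (b - c) ^ 2 / 2 * rpowSecondDiff a y
      ≤ (b ^ 2 + c ^ 2) / 2 * rpowSecondDiff a x - b * c * rpowSecondDiff a y := by
  have hanti := mul_le_mul_of_nonneg_left (rpowSecondDiff_le_of_add_two_le ha₁ ha₂ hx hxy)
    (by positivity : 0 ≤ (b ^ 2 + c ^ 2) / 2)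
  linarith

end Bounds

lemma tendsto_rpow_add_div_rpow (c r : ℝ) :
    Tendsto (fun x : ℝ => (x + c) ^ r / x ^ r) atTop (nhds 1) := by
  have hlin : Tendsto (fun x : ℝ => 1 + c * x⁻¹) atTop (nhds 1) := by
    simpa using (tendsto_inv_atTop_zero.const_mul c).const_add 1
  have hpow := ((continuousAt_rpow_const 1 r (Or.inl one_ne_zero)).tendsto.comp hlin)
  rw [one_rpow] at hpow
  refine hpow.congr' ?_
  filter_upwards [eventually_gt_atTop 0, eventually_gt_atTop (-c)] with x hx hxc
  rw [Function.comp_apply, ← div_rpow (by linarith) hx.le, add_div, div_self hx.ne',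
    div_eq_mul_inv]

lemma tendsto_rpowSecondDiff_add_div_rpow {a : ℝ} (ha₁ : 1 ≤ a) (ha₂ : a ≤ 2) (k : ℝ) :
    Tendsto (fun x : ℝ => rpowSecondDiff a (x + k) / x ^ (a - 2)) atTop
      (nhds (a * (a - 1))) := by
  have hlim : ∀ c, Tendsto (fun x : ℝ => a * (a - 1) * (x + c) ^ (a - 2) / x ^ (a - 2)) atTop
      (nhds (a * (a - 1))) := fun c => by
    simpa [mul_div_assoc] using (tendsto_rpow_add_div_rpow c (a - 2)).const_mul (a * (a - 1))
  refine tendsto_of_tendsto_of_tendsto_of_le_of_le' (hlim (k + 1)) (hlim (k - 1)) ?_ ?_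
    <;> filter_upwards [eventually_gt_atTop 0, eventually_gt_atTop (2 - k)] with x hx hxk
    <;> gcongr
  · rw [← add_assoc]; exact mul_rpow_add_one_le_rpowSecondDiff ha₁ ha₂ (by linarith)
  · rw [← add_sub_assoc]; exact rpowSecondDiff_le_mul_rpow_sub_one ha₁ ha₂ (by linarith)

lemma tendsto_sum_Icc_atTop_of_div_add_le {u : ℕ → ℝ} {C d : ℝ} (hC : 0 < C) (hd : 0 ≤ d)
    (hu : ∀ n : ℕ, 1 ≤ n → C / (n + d) ≤ u n) :
    Tendsto (fun N : ℕ => ∑ n ∈ Finset.Icc 1 N, u n) atTop atTop := by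
  have hharm : ∀ N : ℕ, C / (1 + d) * ∑ i ∈ Finset.range N, (1 / ((i : ℝ) + 1))
      ≤ ∑ n ∈ Finset.Icc 1 N, u n := fun N => by
    induction N with
    | zero => simp
    | succ N ih =>
      rw [Finset.sum_range_succ, mul_add, Finset.sum_Icc_succ_top (by omega)]
      refine add_le_add ih (le_trans ?_ (hu (N + 1) (by omega)))
      push_cast
      rw [div_mul_div_comm, mul_one]
      gcongr
      nlinarith
  exact tendsto_atTop_mono hharm
    (tendsto_sum_range_one_div_nat_succ_atTop.const_mul_atTop (by positivity))

/-- Long-range dependence of mgfBm increments for `H > 1/2` and `b ≠ c`. -/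
theorem mgfBm_long_range_dependence (H b c : ℝ) (hH : H ∈ Set.Ioo (1 / 2 : ℝ) 1)
    (hbc : b ≠ c) (R : ℕ → ℕ → ℝ)
    (hR : ∀ p n : ℕ,
      R p n = (b ^ 2 + c ^ 2) / 2 *
          (((n : ℝ) + 1) ^ (2 * H) - 2 * (n : ℝ) ^ (2 * H) + ((n : ℝ) - 1) ^ (2 * H))
        - b * c *
          ((2 * (p : ℝ) + n + 2) ^ (2 * H) - 2 * (2 * (p : ℝ) + n + 1) ^ (2 * H)
            + (2 * (p : ℝ) + n) ^ (2 * H))) :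
    ∀ p : ℕ, 1 ≤ p →
      Tendsto (fun n : ℕ =>
          R p n / (H * (2 * H - 1) * (b - c) ^ 2 * (n : ℝ) ^ (2 * H - 2)))
        atTop (nhds 1) ∧
      Tendsto (fun N : ℕ => ∑ n ∈ Finset.Icc 1 N, R p n) atTop atTop := by
  obtain ⟨hH₁, hH₂⟩ := hH
  have ha₁ : 1 ≤ 2 * H := by linarith
  have ha₂ : 2 * H ≤ 2 := by linarith
  have hbc' : b - c ≠ 0 := sub_ne_zero.2 hbc
  intro p hp
  have hp' : (1 : ℝ) ≤ p := by exact_mod_cast hp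
  have hR' : ∀ n : ℕ, R p n = (b ^ 2 + c ^ 2) / 2 * rpowSecondDiff (2 * H) n
      - b * c * rpowSecondDiff (2 * H) (n + (2 * p + 1)) := fun n => by
    rw [hR, rpowSecondDiff, rpowSecondDiff]
    ring_nf
  refine ⟨?_, ?_⟩
  · have hlim := ((((tendsto_rpowSecondDiff_add_div_rpow ha₁ ha₂ 0).const_mul
      ((b ^ 2 + c ^ 2) / 2)).sub
      ((tendsto_rpowSecondDiff_add_div_rpow ha₁ ha₂ (2 * p + 1)).const_mul (b * c))).comp
      tendsto_natCast_atTop_atTop).div_const (H * (2 * H - 1) * (b - c) ^ 2)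
    convert hlim using 2 with n
    · rw [div_mul_eq_div_div_swap, hR', sub_div, mul_div_assoc, mul_div_assoc,
        Function.comp_apply, add_zero]
    · rw [eq_div_iff (mul_ne_zero (mul_pos (by linarith) (by linarith)).ne' (by positivity))]
      ring
  · refine tendsto_sum_Icc_atTop_of_div_add_le (C := (b - c) ^ 2 / 2 * (2 * H * (2 * H - 1)))
      (d := 2 * p + 2) (mul_pos (by positivity) (by nlinarith)) (by positivity) fun n hn => ?_
    have hn' : (1 : ℝ) ≤ n := by exact_mod_cast hn
    calc (b - c) ^ 2 / 2 * (2 * H * (2 * H - 1)) / (n + (2 * p + 2))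
        = (b - c) ^ 2 / 2 * (2 * H * (2 * H - 1) / (n + (2 * p + 1) + 1)) := by ring
      _ ≤ (b - c) ^ 2 / 2 * rpowSecondDiff (2 * H) (n + (2 * p + 1)) := by
        gcongr
        exact mul_div_add_one_le_rpowSecondDiff ha₁ ha₂ (by linarith)
      _ ≤ R p n := by
        rw [hR']
        exact sq_sub_div_two_mul_rpowSecondDiff_le ha₁ ha₂ b c hn' (by linarith)
end

section
/- Let H ∈ (0, 1/2), a ≠ 0, b + c ≠ 0, (b,c) ≠ (0,0). Then the Markov triple-point identity C(√t, t²)·C(t,t) = C(√t, t)·C(t, t²) fails for all sufficiently large t, where C(t,s) = a²(t∧s) + ((b+c)²/2)(t^{2H}+s^{2H}) - bc(t+s)^{2H} - ((b²+c²)/2)|t-s|^{2H}. Hence the mixed generalized fractional Brownian motion M^H(a,b,c) is not a Markov process. -/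
/-!
For `x ≤ y` the covariance splits as `a² x + β x^{2H} - y^{2H} φ(x / y)` with
`β = (b + c)² / 2`, `φ(0) = 0` and `φ'(0) = -H (b - c)²`, so the Brownian part cancels from the
Markov defect `C(x, z) C(y, y) - C(x, y) C(y, z)`. At `(x, y, z) = (u, u², u⁴)` the defect
divided by `u^{4H+1}` is a polynomial in `u^{2H-1} → 0` and in the slopes
`u^k φ(u^{-k}) → φ'(0)`; its limit `a² ((b + c)² / 2 - 2^{2H} b c - H (b - c)²)` is positive
because `2H ≤ 2^{2H} < 2`. Substituting `u = √t` gives the claim.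
-/

open Filter Topology Real

noncomputable def mgfCov (H a b c x y : ℝ) : ℝ :=
  a ^ 2 * min x y + (b + c) ^ 2 / 2 * (x ^ (2 * H) + y ^ (2 * H))
    - b * c * (x + y) ^ (2 * H) - (b ^ 2 + c ^ 2) / 2 * |x - y| ^ (2 * H)

noncomputable def gfbmCorrection (H b c ρ : ℝ) : ℝ :=
  b * c * ((1 + ρ) ^ (2 * H) - 1) + (b ^ 2 + c ^ 2) / 2 * ((1 - ρ) ^ (2 * H) - 1)

def markovDefect (C : ℝ → ℝ → ℝ) (x y z : ℝ) : ℝ :=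
  C x z * C y y - C x y * C y z

lemma hasDerivAt_gfbmCorrection_zero (H b c : ℝ) :
    HasDerivAt (gfbmCorrection H b c) (-H * (b - c) ^ 2) 0 := by
  have hplus : HasDerivAt (fun ρ : ℝ => (1 + ρ) ^ (2 * H)) (2 * H) 0 := by
    simpa using ((hasDerivAt_id (0 : ℝ)).const_add 1).rpow_const (p := 2 * H) (by norm_num)
  have hminus : HasDerivAt (fun ρ : ℝ => (1 - ρ) ^ (2 * H)) (-(2 * H)) 0 := by
    simpa using ((hasDerivAt_id (0 : ℝ)).const_sub 1).rpow_const (p := 2 * H) (by norm_num)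
  exact (((hplus.sub_const 1).const_mul (b * c)).add
    ((hminus.sub_const 1).const_mul ((b ^ 2 + c ^ 2) / 2))).congr_deriv (by ring)

lemma tendsto_pow_mul_gfbmCorrection_inv_pow (H b c : ℝ) {k : ℕ} (hk : k ≠ 0) :
    Tendsto (fun u : ℝ => u ^ k * gfbmCorrection H b c (u ^ k)⁻¹) atTop
      (𝓝 (-H * (b - c) ^ 2)) := by
  have hslope := (hasDerivAt_gfbmCorrection_zero H b c).tendsto_slope_zero_right.comp
    (tendsto_inv_atTop_nhdsGT_zero.comp (tendsto_pow_atTop hk))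
  refine hslope.congr fun u => ?_
  simp [gfbmCorrection]

lemma mgfCov_of_le (H a b c : ℝ) {x y : ℝ} (hx : 0 < x) (hxy : x ≤ y) :
    mgfCov H a b c x y
      = a ^ 2 * x + (b + c) ^ 2 / 2 * x ^ (2 * H) - y ^ (2 * H) * gfbmCorrection H b c (x / y) := by
  have hy : 0 < y := hx.trans_le hxy
  have hρ : 0 ≤ 1 - x / y := by rw [sub_nonneg, div_le_one hy]; exact hxy
  have hsum : (x + y) ^ (2 * H) = y ^ (2 * H) * (1 + x / y) ^ (2 * H) := by
    rw [← mul_rpow hy.le (by positivity)]; field_simp; ring_nf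
  have hdiff : |x - y| ^ (2 * H) = y ^ (2 * H) * (1 - x / y) ^ (2 * H) := by
    rw [abs_sub_comm, abs_of_nonneg (sub_nonneg.2 hxy), ← mul_rpow hy.le hρ]; field_simp
  rw [mgfCov, gfbmCorrection, min_eq_left hxy, hsum, hdiff]
  ring

lemma mgfCov_self (H a b c : ℝ) (hH : 0 < H) {y : ℝ} (hy : 0 ≤ y) :
    mgfCov H a b c y y
      = a ^ 2 * y + ((b + c) ^ 2 - 2 ^ (2 * H) * (b * c)) * y ^ (2 * H) := by
  rw [mgfCov, min_self, sub_self, abs_zero, zero_rpow (by positivity),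
    ← two_mul y, mul_rpow zero_le_two hy]
  ring

noncomputable def mgfNormalizedDefect (H a b c ε s₁ s₂ s₃ : ℝ) : ℝ :=
  ((b + c) ^ 2 / 2 - 2 ^ (2 * H) * (b * c)) * (a ^ 2 + (b + c) ^ 2 / 2 * ε)
    + s₁ * (a ^ 2 + (b + c) ^ 2 / 2 * ε ^ 2) + ε ^ 2 * s₂ * (a ^ 2 + (b + c) ^ 2 / 2 * ε)
    - ε ^ 2 * s₃ * (a ^ 2 + ((b + c) ^ 2 - 2 ^ (2 * H) * (b * c)) * ε ^ 2)
    - ε ^ 4 * s₁ * s₂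

lemma markovDefect_mgfCov_pow (H a b c : ℝ) (hH : 0 < H) {u : ℝ} (hu : 1 ≤ u) :
    markovDefect (mgfCov H a b c) u (u ^ 2) (u ^ 4)
      = u * (u ^ (2 * H)) ^ 2 * mgfNormalizedDefect H a b c (u ^ (2 * H) / u)
          (u * gfbmCorrection H b c u⁻¹) (u ^ 2 * gfbmCorrection H b c (u ^ 2)⁻¹)
          (u ^ 3 * gfbmCorrection H b c (u ^ 3)⁻¹) := by
  have hu0 : 0 < u := one_pos.trans_le hu
  rw [markovDefect, mgfCov_of_le _ _ _ _ hu0 (le_self_pow₀ hu (by norm_num)),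
    mgfCov_self _ _ _ _ hH (by positivity),
    mgfCov_of_le _ _ _ _ hu0 (le_self_pow₀ hu (by norm_num)),
    mgfCov_of_le _ _ _ _ (by positivity) (pow_le_pow_right₀ hu (by norm_num : 2 ≤ 4)),
    ← rpow_pow_comm hu0.le, ← rpow_pow_comm hu0.le,
    show u / u ^ 4 = (u ^ 3)⁻¹ by field_simp, show u / u ^ 2 = u⁻¹ by field_simp,
    show u ^ 2 / u ^ 4 = (u ^ 2)⁻¹ by field_simp, mgfNormalizedDefect]
  generalize u ^ (2 * H) = w
  generalize gfbmCorrection H b c u⁻¹ = p₁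
  generalize gfbmCorrection H b c (u ^ 2)⁻¹ = p₂
  generalize gfbmCorrection H b c (u ^ 3)⁻¹ = p₃
  field_simp
  ring

lemma tendsto_mgfNormalizedDefect (H a b c : ℝ) (hH : H < 1 / 2) :
    Tendsto (fun u : ℝ => mgfNormalizedDefect H a b c (u ^ (2 * H) / u)
        (u * gfbmCorrection H b c u⁻¹) (u ^ 2 * gfbmCorrection H b c (u ^ 2)⁻¹)
        (u ^ 3 * gfbmCorrection H b c (u ^ 3)⁻¹)) atTop
      (𝓝 (a ^ 2 * ((b + c) ^ 2 / 2 - 2 ^ (2 * H) * (b * c) - H * (b - c) ^ 2))) := by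
  have hε : Tendsto (fun u : ℝ => u ^ (2 * H) / u) atTop (𝓝 0) := by
    refine (tendsto_rpow_neg_atTop (y := 1 - 2 * H) (by linarith)).congr' ?_
    filter_upwards [eventually_gt_atTop 0] with u hu
    rw [neg_sub, rpow_sub_one hu.ne']
  have hs (k : ℕ) (hk : k ≠ 0) := tendsto_pow_mul_gfbmCorrection_inv_pow H b c hk
  have hs₁ : Tendsto (fun u : ℝ => u * gfbmCorrection H b c u⁻¹) atTop
      (𝓝 (-H * (b - c) ^ 2)) := by
    simpa using hs 1 one_ne_zero
  have hcont : Continuous fun p : ℝ × ℝ × ℝ × ℝ =>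
      mgfNormalizedDefect H a b c p.1 p.2.1 p.2.2.1 p.2.2.2 := by
    unfold mgfNormalizedDefect; fun_prop
  have hlimit : a ^ 2 * ((b + c) ^ 2 / 2 - 2 ^ (2 * H) * (b * c) - H * (b - c) ^ 2)
      = mgfNormalizedDefect H a b c 0 (-H * (b - c) ^ 2) (-H * (b - c) ^ 2)
          (-H * (b - c) ^ 2) := by
    simp only [mgfNormalizedDefect]; ring
  rw [hlimit]
  have hcomp := (hcont.tendsto _).comp (hε.prodMk_nhds (hs₁.prodMk_nhds
    ((hs 2 two_ne_zero).prodMk_nhds (hs 3 three_ne_zero))))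
  exact hcomp

lemma two_mul_le_two_rpow {p : ℝ} (hp₀ : 0 ≤ p) (hp₁ : p ≤ 1) :
    2 * p ≤ (2 : ℝ) ^ p := by
  have hbernoulli : (2 : ℝ) ^ (1 - p) ≤ 1 + (1 - p) * 1 := by
    simpa [one_add_one_eq_two] using
      rpow_one_add_le_one_add_mul_self (s := 1) (by norm_num) (by linarith)
        (by linarith : 1 - p ≤ 1)
  have hsplit : (2 : ℝ) ^ p * 2 ^ (1 - p) = 2 := by
    rw [← rpow_add two_pos, add_sub_cancel, rpow_one]
  nlinarith [rpow_pos_of_pos two_pos p, rpow_pos_of_pos two_pos (1 - p)]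

lemma mgfDefect_leadingCoeff_pos (H b c : ℝ) (hH : H ∈ Set.Ioo (0 : ℝ) (1 / 2))
    (hbc : b + c ≠ 0) :
    0 < (b + c) ^ 2 / 2 - 2 ^ (2 * H) * (b * c) - H * (b - c) ^ 2 := by
  obtain ⟨hH₀, hH₁⟩ := hH
  have hlt : (2 : ℝ) ^ (2 * H) < 2 := by
    simpa using rpow_lt_rpow_of_exponent_lt one_lt_two (by linarith : 2 * H < 1)
  have hge := two_mul_le_two_rpow (p := 2 * H) (by linarith) (by linarith)
  have hsplit : (b + c) ^ 2 / 2 - 2 ^ (2 * H) * (b * c) - H * (b - c) ^ 2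
      = (2 - 2 ^ (2 * H)) * (b + c) ^ 2 / 4
          + (2 ^ (2 * H) - 2 * (2 * H)) * (b - c) ^ 2 / 4 := by
    ring
  rw [hsplit]
  positivity

lemma eventually_markovDefect_mgfCov_pos (H a b c : ℝ) (hH : H ∈ Set.Ioo (0 : ℝ) (1 / 2))
    (ha : a ≠ 0) (hbc : b + c ≠ 0) :
    ∀ᶠ u in atTop, 0 < markovDefect (mgfCov H a b c) u (u ^ 2) (u ^ 4) := by
  have hlimit_pos :=
    mul_pos (by positivity : 0 < a ^ 2) (mgfDefect_leadingCoeff_pos H b c hH hbc)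
  filter_upwards [(tendsto_mgfNormalizedDefect H a b c hH.2).eventually
    (eventually_gt_nhds hlimit_pos), eventually_ge_atTop 1] with u hpoly hu
  rw [markovDefect_mgfCov_pow H a b c hH.1 hu]
  exact mul_pos (by positivity) hpoly

theorem mgfBm_not_markov_general (H a b c : ℝ) (hH : H ∈ Set.Ioo (0 : ℝ) (1 / 2))
    (ha : a ≠ 0) (hbc : b + c ≠ 0)
    (C : ℝ → ℝ → ℝ)
    (hC : ∀ t s : ℝ,
      C t s = a ^ 2 * min t s + (b + c) ^ 2 / 2 * (t ^ (2 * H) + s ^ (2 * H))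
        - b * c * (t + s) ^ (2 * H) - (b ^ 2 + c ^ 2) / 2 * |t - s| ^ (2 * H)) :
    ∃ T : ℝ, ∀ t : ℝ, T ≤ t →
      C (Real.sqrt t) (t ^ 2) * C t t ≠ C (Real.sqrt t) t * C t (t ^ 2) := by
  have hC' : C = mgfCov H a b c := funext fun t => funext (hC t)
  obtain ⟨T, hT⟩ := eventually_atTop.1 <| (tendsto_sqrt_atTop.eventually
    (eventually_markovDefect_mgfCov_pos H a b c hH ha hbc)).and (eventually_ge_atTop 0)
  refine ⟨T, fun t ht => ?_⟩
  obtain ⟨hdefect, ht₀⟩ := hT t ht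
  rw [show √t ^ 4 = (√t ^ 2) ^ 2 by ring, sq_sqrt ht₀, ← hC'] at hdefect
  exact sub_ne_zero.1 hdefect.ne'

/-- Failure of the Markov triple-point identity for the mgfBm (`H < 1/2`, `a ≠ 0`,
`b + c ≠ 0`): the mgfBm is not Markovian. -/
theorem mgfBm_not_markov (H a b c : ℝ) (hH : H ∈ Set.Ioo (0 : ℝ) (1 / 2))
    (ha : a ≠ 0) (hbc : b + c ≠ 0) (hbc' : (b, c) ≠ (0, 0))
    (C : ℝ → ℝ → ℝ)
    (hC : ∀ t s : ℝ,
      C t s = a ^ 2 * min t s + (b + c) ^ 2 / 2 * (t ^ (2 * H) + s ^ (2 * H))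
        - b * c * (t + s) ^ (2 * H) - (b ^ 2 + c ^ 2) / 2 * |t - s| ^ (2 * H)) :
    ∃ T : ℝ, ∀ t : ℝ, T ≤ t →
      C (Real.sqrt t) (t ^ 2) * C t t ≠ C (Real.sqrt t) t * C t (t ^ 2) :=
  mgfBm_not_markov_general H a b c hH ha hbc C hC
end

section
/- Let H ∈ (1/2, 1), a,b,c ∈ ℝ with (b,c) ≠ (0,0), and suppose bc ≥ 0 (so that γ = b² + c² - 2bc(2^{2H-1}-1) > 0). Then for all 0 ≤ s < t, E[(M^H_t(a,b,c) - M^H_s(a,b,c))²] ≥ γ (t-s)^{2H}, where the left-hand side equals a²(t-s) - 2^{2H}bc(t^{2H}+s^{2H}) + (b²+c²)(t-s)^{2H} + 2bc(t+s)^{2H}. In particular the increment variance is bounded below and above by constant multiples of (t-s)^{2H}. -/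
/-!
Write `α = 2H` and `θ = 2^(α-1) - 1`. Since `2^α = 2 · 2^(α-1)`, the right-hand side minus
`γ (t-s)^α` equals `a²(t-s) + 2bc [(t+s)^α + θ(t-s)^α - 2^(α-1)(t^α + s^α)]`, so for `bc ≥ 0`
it suffices that the bracket is nonnegative. With `u = t - s` fixed, the bracket is a
nondecreasing function of `s ≥ 0` which vanishes at `s = 0`: its derivative is nonnegative by
midpoint concavity of `x ↦ x^(α-1)`. Finally `γ > 0` since `|θ| < 1`.
-/

open Real Set

namespace Real

lemma rpow_add_rpow_le_two_mul_rpow_midpoint {p x y : ℝ} (hp₀ : 0 ≤ p) (hp₁ : p ≤ 1)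
    (hx : 0 ≤ x) (hy : 0 ≤ y) : x ^ p + y ^ p ≤ 2 * ((x + y) / 2) ^ p := by
  have h := (concaveOn_rpow hp₀ hp₁).2 (mem_Ici.2 hx) (mem_Ici.2 hy)
    (by norm_num : (0 : ℝ) ≤ 1 / 2) (by norm_num : (0 : ℝ) ≤ 1 / 2) (by norm_num)
  simp only [smul_eq_mul] at h
  rw [show 1 / 2 * x + 1 / 2 * y = (x + y) / 2 by ring] at h
  linarith

lemma hasDerivAt_rpow_const_comp_const_add_mul {p : ℝ} (hp : 1 ≤ p) (u k v : ℝ) :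
    HasDerivAt (fun v ↦ (u + k * v) ^ p) (p * (u + k * v) ^ (p - 1) * k) v := by
  have hlin : HasDerivAt (fun v : ℝ ↦ u + k * v) k v := by
    simpa using ((hasDerivAt_id v).const_mul k).const_add u
  exact (hasDerivAt_rpow_const (Or.inr hp)).comp v hlin

lemma monotoneOn_rpow_add_two_mul_sub_two_rpow_mul {α u : ℝ} (hα₁ : 1 ≤ α) (hα₂ : α ≤ 2)
    (hu : 0 ≤ u) :
    MonotoneOn (fun v ↦ (u + 2 * v) ^ α - 2 ^ (α - 1) * ((u + v) ^ α + v ^ α)) (Ici 0) := by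
  have hderiv (v : ℝ) : HasDerivAt (fun v ↦ (u + 2 * v) ^ α - 2 ^ (α - 1) * ((u + v) ^ α + v ^ α))
      (α * (u + 2 * v) ^ (α - 1) * 2 -
        2 ^ (α - 1) * (α * (u + v) ^ (α - 1) + α * v ^ (α - 1))) v := by
    have h₁ := hasDerivAt_rpow_const_comp_const_add_mul hα₁ u 1 v
    have h₀ := hasDerivAt_rpow_const_comp_const_add_mul hα₁ 0 1 v
    simp only [one_mul, mul_one, zero_add] at h₁ h₀
    exact (hasDerivAt_rpow_const_comp_const_add_mul hα₁ u 2 v).sub ((h₁.add h₀).const_mul _)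
  refine monotoneOn_of_hasDerivWithinAt_nonneg (convex_Ici 0)
    (fun v _ ↦ (hderiv v).continuousAt.continuousWithinAt)
    (fun v _ ↦ (hderiv v).hasDerivWithinAt) fun v hv ↦ ?_
  rw [interior_Ici, mem_Ioi] at hv
  have hmid := rpow_add_rpow_le_two_mul_rpow_midpoint (by linarith : 0 ≤ α - 1)
    (by linarith : α - 1 ≤ 1) (by linarith : 0 ≤ u + v) hv.le
  rw [show (u + v + v) / 2 = (u + 2 * v) / 2 by ring,
    div_rpow (by linarith) zero_le_two] at hmid
  have hconc : 2 ^ (α - 1) * ((u + v) ^ (α - 1) + v ^ (α - 1)) ≤ 2 * (u + 2 * v) ^ (α - 1) := by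
    calc 2 ^ (α - 1) * ((u + v) ^ (α - 1) + v ^ (α - 1))
        ≤ 2 ^ (α - 1) * (2 * ((u + 2 * v) ^ (α - 1) / 2 ^ (α - 1))) := by gcongr
      _ = 2 * (u + 2 * v) ^ (α - 1) := by field_simp
  nlinarith [mul_le_mul_of_nonneg_left hconc (by linarith : (0 : ℝ) ≤ α)]

lemma two_rpow_mul_rpow_add_rpow_le {α s t : ℝ} (hα₁ : 1 ≤ α) (hα₂ : α ≤ 2) (hs : 0 ≤ s)
    (hst : s ≤ t) :
    2 ^ (α - 1) * (t ^ α + s ^ α) ≤ (t + s) ^ α + (2 ^ (α - 1) - 1) * (t - s) ^ α := by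
  have h := monotoneOn_rpow_add_two_mul_sub_two_rpow_mul hα₁ hα₂ (sub_nonneg.2 hst)
    (mem_Ici.2 le_rfl) (mem_Ici.2 hs) hs
  simp only [mul_zero, add_zero, zero_rpow (by linarith : α ≠ 0)] at h
  rw [show t - s + 2 * s = t + s by ring, sub_add_cancel] at h
  linarith

lemma abs_two_rpow_sub_one_lt_one {p : ℝ} (hp : p < 1) : |(2 : ℝ) ^ p - 1| < 1 := by
  have hlt : (2 : ℝ) ^ p < 2 := by
    simpa using rpow_lt_rpow_of_exponent_lt one_lt_two hp
  rw [abs_sub_lt_iff]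
  constructor <;> linarith [rpow_pos_of_pos two_pos p]

end Real

/-- For `0 ≤ θ`, `b² + c² - 2θbc = (1 - θ)(b² + c²) + θ(b - c)²`; for `θ ≤ 0` use `b + c`. -/
lemma sq_add_sq_sub_two_mul_mul_mul_pos {b c θ : ℝ} (hθ : |θ| < 1) (hbc : (b, c) ≠ (0, 0)) :
    0 < b ^ 2 + c ^ 2 - 2 * b * c * θ := by
  obtain ⟨hθ₁, hθ₂⟩ := abs_lt.1 hθ
  have hnorm : 0 < b ^ 2 + c ^ 2 := by
    have hbc₀ : b ≠ 0 ∨ c ≠ 0 := by contrapose! hbc; simp [hbc]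
    rcases hbc₀ with h | h <;> positivity
  rcases le_total 0 θ with hθ₀ | hθ₀
  · nlinarith [mul_pos (sub_pos.2 hθ₂) hnorm, mul_nonneg hθ₀ (sq_nonneg (b - c))]
  · nlinarith [mul_pos (neg_lt_iff_pos_add.1 hθ₁) hnorm,
      mul_nonneg (neg_nonneg.2 hθ₀) (sq_nonneg (b + c))]

/-- Lower bound on the increment variance of the mgfBm for `H > 1/2`, `bc ≥ 0`. -/
theorem mgfBm_increment_lower_bound (H a b c : ℝ) (hH : H ∈ Set.Ioo (1 / 2 : ℝ) 1)
    (hbc : (b, c) ≠ (0, 0)) (hbc' : 0 ≤ b * c) :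
    0 < b ^ 2 + c ^ 2 - 2 * b * c * (2 ^ (2 * H - 1) - 1) ∧
    ∀ s t : ℝ, 0 ≤ s → s < t →
      (b ^ 2 + c ^ 2 - 2 * b * c * (2 ^ (2 * H - 1) - 1)) * (t - s) ^ (2 * H)
        ≤ a ^ 2 * (t - s) - 2 ^ (2 * H) * b * c * (t ^ (2 * H) + s ^ (2 * H))
            + (b ^ 2 + c ^ 2) * (t - s) ^ (2 * H) + 2 * b * c * (t + s) ^ (2 * H) := by
  obtain ⟨hH₁, hH₂⟩ := hH
  refine ⟨sq_add_sq_sub_two_mul_mul_mul_pos (abs_two_rpow_sub_one_lt_one (by linarith)) hbc,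
    fun s t hs hst ↦ ?_⟩
  have hkey := two_rpow_mul_rpow_add_rpow_le (by linarith : 1 ≤ 2 * H) (by linarith) hs hst.le
  have htwo : (2 : ℝ) ^ (2 * H) = 2 * 2 ^ (2 * H - 1) := by
    rw [← rpow_one_add' zero_le_two (by linarith)]
    ring_nf
  rw [htwo]
  linear_combination 2 * mul_le_mul_of_nonneg_left hkey hbc' +
    mul_nonneg (sq_nonneg a) (sub_nonneg.2 hst.le)
end

section
/- For any H ∈ (0,1), the function (t,s) ↦ a²(t∧s) + ((b+c)²/2)(t^{2H}+s^{2H}) - bc(t+s)^{2H} - ((b²+c²)/2)|t-s|^{2H} on [0,∞)² is symmetric and positive semidefinite (i.e., for all n, all t₁,…,tₙ ≥ 0 and real λ₁,…,λₙ, Σ_{i,j} λᵢλⱼ C(tᵢ,tⱼ) ≥ 0). -/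
/-!
For `0 < α < 2` the substitution `u ↦ |x| u` gives
`∫₀^∞ (1 - cos (x u)) u^(-1-α) du = |x|^α ∫₀^∞ (1 - cos u) u^(-1-α) du`, with a positive constant
on the right. Inserting this for each power `|·|^(2H)` in the gfBm covariance and expanding
`cos ((t ± s) u)` turns the covariance, up to that constant, into
`∫₀^∞ u^(-1-2H) ((b+c)²/2 (1 - cos tu)(1 - cos su) + (b-c)²/2 sin tu sin su) du`,
an integral of kernels of the form `f t * f s`, hence positive semidefinite. The Brownian part
`min t s` is the gfBm covariance with `H = 1/2`, `b = 1`, `c = 0`.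
-/

open MeasureTheory Real Set

section SpectralRepresentation

variable {α : ℝ}

lemma continuousOn_one_sub_cos_mul_rpow (α x : ℝ) :
    ContinuousOn (fun u : ℝ => (1 - cos (x * u)) * u ^ (-1 - α)) (Ioi 0) :=
  (Continuous.continuousOn (by fun_prop)).mul
    (continuousOn_id.rpow_const fun u hu => Or.inl (ne_of_gt hu))

lemma one_sub_cos_mul_rpow_nonneg (α x : ℝ) {u : ℝ} (hu : 0 ≤ u) :
    0 ≤ (1 - cos (x * u)) * u ^ (-1 - α) :=
  mul_nonneg (sub_nonneg.2 (cos_le_one _)) (rpow_nonneg hu _)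

lemma integrableOn_one_sub_cos_mul_rpow (hα : 0 < α) (hα2 : α < 2) (x : ℝ) :
    IntegrableOn (fun u : ℝ => (1 - cos (x * u)) * u ^ (-1 - α)) (Ioi 0) := by
  set f := fun u : ℝ => (1 - cos (x * u)) * u ^ (-1 - α)
  have hmeas {s : Set ℝ} (hs : MeasurableSet s) (hsub : s ⊆ Ioi 0) :
      AEStronglyMeasurable f (volume.restrict s) :=
    ((continuousOn_one_sub_cos_mul_rpow α x).mono hsub).aestronglyMeasurable hs
  -- near `0`, `1 - cos (x u) ≤ (x u)² / 2`; near `∞`, `1 - cos (x u) ≤ 2`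
  have h_zero : IntegrableOn f (Ioc 0 1) := by
    have hg : IntegrableOn (fun u : ℝ => x ^ 2 / 2 * u ^ (1 - α)) (Ioc 0 1) :=
      ((intervalIntegrable_iff_integrableOn_Ioc_of_le zero_le_one).1
        (intervalIntegral.intervalIntegrable_rpow' (by linarith))).const_mul _
    refine hg.mono' (hmeas measurableSet_Ioc fun u hu => hu.1) ?_
    refine (ae_restrict_iff' measurableSet_Ioc).2 (Filter.Eventually.of_forall fun u hu => ?_)
    have hu0 : 0 < u := hu.1
    rw [norm_of_nonneg (one_sub_cos_mul_rpow_nonneg α x hu0.le)]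
    calc (1 - cos (x * u)) * u ^ (-1 - α)
        ≤ (x * u) ^ 2 / 2 * u ^ (-1 - α) := by
          gcongr; linarith [one_sub_sq_div_two_le_cos (x := x * u)]
      _ = x ^ 2 / 2 * (u ^ (2 : ℝ) * u ^ (-1 - α)) := by rw [rpow_two]; ring
      _ = x ^ 2 / 2 * u ^ (1 - α) := by rw [← rpow_add hu0]; ring_nf
  have h_infty : IntegrableOn f (Ioi 1) := by
    have hg : IntegrableOn (fun u : ℝ => 2 * u ^ (-1 - α)) (Ioi 1) :=
      (integrableOn_Ioi_rpow_of_lt (by linarith) one_pos).const_mul 2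
    refine hg.mono' (hmeas measurableSet_Ioi fun u (hu : 1 < u) => one_pos.trans hu) ?_
    refine (ae_restrict_iff' measurableSet_Ioi).2 (Filter.Eventually.of_forall fun u hu => ?_)
    have hu0 : (0 : ℝ) < u := lt_trans one_pos hu
    rw [norm_of_nonneg (one_sub_cos_mul_rpow_nonneg α x hu0.le)]
    gcongr
    linarith [neg_one_le_cos (x * u)]
  rw [← Ioc_union_Ioi_eq_Ioi zero_le_one]
  exact h_zero.union h_infty

lemma integral_one_sub_cos_mul_rpow_pos (hα : 0 < α) (hα2 : α < 2) :
    0 < ∫ u in Ioi 0, (1 - cos u) * u ^ (-1 - α) := by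
  have hint := integrableOn_one_sub_cos_mul_rpow hα hα2 1
  simp only [one_mul] at hint
  have hpos : 0 < ∫ u in (0 : ℝ)..π, (1 - cos u) * u ^ (-1 - α) := by
    refine intervalIntegral.intervalIntegral_pos_of_pos_on ?_ (fun u hu => ?_) pi_pos
    · exact (intervalIntegrable_iff_integrableOn_Ioc_of_le pi_pos.le).2
        (hint.mono_set Ioc_subset_Ioi_self)
    · have : cos u < cos 0 := cos_lt_cos_of_nonneg_of_le_pi le_rfl hu.2.le hu.1
      exact mul_pos (by rw [cos_zero] at this; linarith) (rpow_pos_of_pos hu.1 _)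
  rw [intervalIntegral.integral_of_le pi_pos.le] at hpos
  refine hpos.trans_le (setIntegral_mono_set hint ?_ Ioc_subset_Ioi_self.eventuallyLE)
  refine (ae_restrict_iff' measurableSet_Ioi).2 (Filter.Eventually.of_forall fun u hu => ?_)
  simpa using one_sub_cos_mul_rpow_nonneg α 1 (le_of_lt hu)

lemma integral_one_sub_cos_mul_rpow (hα : α ≠ 0) (x : ℝ) :
    ∫ u in Ioi 0, (1 - cos (x * u)) * u ^ (-1 - α) =
      |x| ^ α * ∫ u in Ioi 0, (1 - cos u) * u ^ (-1 - α) := by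
  rcases eq_or_ne x 0 with rfl | hx
  · simp [zero_rpow hα]
  have hp : 0 < |x| := abs_pos.2 hx
  have hscale : ∀ u ∈ Ioi (0 : ℝ), (1 - cos (x * u)) * u ^ (-1 - α) =
      |x| ^ (1 + α) * ((1 - cos (|x| * u)) * (|x| * u) ^ (-1 - α)) := by
    intro u hu
    rw [← cos_abs (x * u), abs_mul, abs_of_pos (show (0 : ℝ) < u from hu),
      mul_rpow hp.le (le_of_lt hu), ← mul_assoc, mul_comm _ (1 - _), mul_assoc,
      ← mul_assoc (|x| ^ (1 + α)), ← rpow_add hp]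
    norm_num
  rw [setIntegral_congr_fun measurableSet_Ioi hscale, integral_const_mul,
    integral_comp_mul_left_Ioi (fun u => (1 - cos u) * u ^ (-1 - α)) 0 hp, mul_zero,
    smul_eq_mul, ← mul_assoc, ← rpow_neg_one, ← rpow_add hp]
  norm_num

end SpectralRepresentation

def PosSemidefOn {ι : Type*} (K : ι → ι → ℝ) (S : Set ι) : Prop :=
  ∀ (n : ℕ) (t : Fin n → ι), (∀ i, t i ∈ S) → ∀ lam : Fin n → ℝ,
    0 ≤ ∑ i, ∑ j, lam i * lam j * K (t i) (t j)

namespace PosSemidefOn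

variable {ι : Type*} {K L : ι → ι → ℝ} {S : Set ι}

lemma mul_self (f : ι → ℝ) (S : Set ι) : PosSemidefOn (fun t s => f t * f s) S := by
  intro n t _ lam
  have : ∑ i, ∑ j, lam i * lam j * (f (t i) * f (t j)) = (∑ i, lam i * f (t i)) ^ 2 := by
    rw [sq, Finset.sum_mul_sum]
    exact Finset.sum_congr rfl fun i _ => Finset.sum_congr rfl fun j _ => by ring
  exact this ▸ sq_nonneg _

lemma add (hK : PosSemidefOn K S) (hL : PosSemidefOn L S) :
    PosSemidefOn (fun t s => K t s + L t s) S := by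
  intro n t ht lam
  simp only [mul_add, Finset.sum_add_distrib]
  exact add_nonneg (hK n t ht lam) (hL n t ht lam)

lemma const_mul (hK : PosSemidefOn K S) {c : ℝ} (hc : 0 ≤ c) :
    PosSemidefOn (fun t s => c * K t s) S := by
  intro n t ht lam
  have : ∑ i, ∑ j, lam i * lam j * (c * K (t i) (t j)) =
      c * ∑ i, ∑ j, lam i * lam j * K (t i) (t j) := by
    simp only [Finset.mul_sum]
    exact Finset.sum_congr rfl fun i _ => Finset.sum_congr rfl fun j _ => by ring
  exact this ▸ mul_nonneg hc (hK n t ht lam)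

lemma of_const_mul {c : ℝ} (hc : 0 < c) (hK : PosSemidefOn (fun t s => c * K t s) S) :
    PosSemidefOn K S := by
  simpa [inv_mul_cancel_left₀ hc.ne'] using hK.const_mul (inv_nonneg.2 hc.le)

lemma congr (hK : PosSemidefOn K S) (h : ∀ t ∈ S, ∀ s ∈ S, K t s = L t s) :
    PosSemidefOn L S := by
  intro n t ht lam
  simpa only [h _ (ht _) _ (ht _)] using hK n t ht lam

lemma integral {X : Type*} [MeasurableSpace X] {μ : Measure X} {k : ι → ι → X → ℝ}
    (hint : ∀ t ∈ S, ∀ s ∈ S, Integrable (k t s) μ)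
    (hk : ∀ᵐ u ∂μ, PosSemidefOn (fun t s => k t s u) S) :
    PosSemidefOn (fun t s => ∫ u, k t s u ∂μ) S := by
  intro n t ht lam
  have hint' : ∀ i j, Integrable (fun u => lam i * lam j * k (t i) (t j) u) μ :=
    fun i j => (hint _ (ht i) _ (ht j)).const_mul _
  have : ∑ i, ∑ j, lam i * lam j * ∫ u, k (t i) (t j) u ∂μ =
      ∫ u, ∑ i, ∑ j, lam i * lam j * k (t i) (t j) u ∂μ := by
    rw [integral_finsetSum _ fun i _ => integrable_finsetSum _ fun j _ => hint' i j]
    refine Finset.sum_congr rfl fun i _ => ?_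
    rw [integral_finsetSum _ fun j _ => hint' i j]
    exact Finset.sum_congr rfl fun j _ => (integral_const_mul _ _).symm
  rw [this]
  exact integral_nonneg_of_ae (hk.mono fun u hu => hu n t ht lam)

end PosSemidefOn

noncomputable def gfbmCovariance (H b c t s : ℝ) : ℝ :=
  (b + c) ^ 2 / 2 * (t ^ (2 * H) + s ^ (2 * H)) - b * c * (t + s) ^ (2 * H)
    - (b ^ 2 + c ^ 2) / 2 * |t - s| ^ (2 * H)

lemma gfbmCovariance_half_one_zero (t s : ℝ) : gfbmCovariance (1 / 2) 1 0 t s = min t s := by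
  rcases le_total t s with h | h
  · rw [min_eq_left h, gfbmCovariance, abs_of_nonpos (by linarith)]; norm_num; ring
  · rw [min_eq_right h, gfbmCovariance, abs_of_nonneg (by linarith)]; norm_num; ring

noncomputable def gfbmSpectralIntegrand (H b c t s u : ℝ) : ℝ :=
  u ^ (-1 - 2 * H) * ((b + c) ^ 2 / 2 * ((1 - cos (t * u)) * (1 - cos (s * u)))
    + (b - c) ^ 2 / 2 * (sin (t * u) * sin (s * u)))

lemma posSemidefOn_gfbmSpectralIntegrand (H b c : ℝ) {u : ℝ} (hu : 0 ≤ u) (S : Set ℝ) :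
    PosSemidefOn (fun t s => gfbmSpectralIntegrand H b c t s u) S :=
  (((PosSemidefOn.mul_self (fun t => 1 - cos (t * u)) S).const_mul (by positivity)).add
    ((PosSemidefOn.mul_self (fun t => sin (t * u)) S).const_mul (by positivity))).const_mul
    (rpow_nonneg hu _)

lemma gfbmSpectralIntegrand_eq (H b c t s u : ℝ) :
    gfbmSpectralIntegrand H b c t s u =
      (b + c) ^ 2 / 2 * ((1 - cos (t * u)) * u ^ (-1 - 2 * H)
        + (1 - cos (s * u)) * u ^ (-1 - 2 * H))
      - b * c * ((1 - cos ((t + s) * u)) * u ^ (-1 - 2 * H))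
      - (b ^ 2 + c ^ 2) / 2 * ((1 - cos ((t - s) * u)) * u ^ (-1 - 2 * H)) := by
  rw [gfbmSpectralIntegrand, add_mul t, sub_mul t, cos_add, cos_sub]
  ring

lemma integrableOn_gfbmSpectralIntegrand {H : ℝ} (hH : H ∈ Ioo 0 1) (b c t s : ℝ) :
    IntegrableOn (gfbmSpectralIntegrand H b c t s) (Ioi 0) := by
  have hk := integrableOn_one_sub_cos_mul_rpow (α := 2 * H) (by linarith [hH.1])
    (by linarith [hH.2])
  simp only [funext (gfbmSpectralIntegrand_eq H b c t s)]
  exact ((((hk t).add (hk s)).const_mul _).sub ((hk _).const_mul _)).sub ((hk _).const_mul _)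

lemma integral_gfbmSpectralIntegrand {H : ℝ} (hH : H ∈ Ioo 0 1) (b c : ℝ) {t s : ℝ}
    (ht : 0 ≤ t) (hs : 0 ≤ s) :
    ∫ u in Ioi 0, gfbmSpectralIntegrand H b c t s u =
      (∫ u in Ioi 0, (1 - cos u) * u ^ (-1 - 2 * H)) * gfbmCovariance H b c t s := by
  have hk := integrableOn_one_sub_cos_mul_rpow (α := 2 * H) (by linarith [hH.1])
    (by linarith [hH.2])
  have hI := integral_one_sub_cos_mul_rpow (α := 2 * H) (by linarith [hH.1])
  have hdiag := ((hk t).fun_add (hk s)).const_mul ((b + c) ^ 2 / 2)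
  have hplus := (hk (t + s)).const_mul (b * c)
  have hminus := (hk (t - s)).const_mul ((b ^ 2 + c ^ 2) / 2)
  simp only [gfbmSpectralIntegrand_eq]
  rw [integral_sub ?_ hminus, integral_sub hdiag hplus, integral_const_mul, integral_const_mul,
    integral_const_mul, integral_add (hk t) (hk s), hI, hI, hI, hI, abs_of_nonneg ht,
    abs_of_nonneg hs, abs_of_nonneg (add_nonneg ht hs), gfbmCovariance]
  · ring
  · exact hdiag.sub hplus

lemma posSemidefOn_gfbmCovariance {H : ℝ} (hH : H ∈ Ioo 0 1) (b c : ℝ) :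
    PosSemidefOn (gfbmCovariance H b c) (Ici 0) := by
  refine PosSemidefOn.of_const_mul (integral_one_sub_cos_mul_rpow_pos
    (α := 2 * H) (by linarith [hH.1]) (by linarith [hH.2])) ?_
  refine (PosSemidefOn.integral (fun t _ s _ => integrableOn_gfbmSpectralIntegrand hH b c t s)
    ?_).congr fun t ht s hs => integral_gfbmSpectralIntegrand hH b c ht hs
  exact (ae_restrict_iff' measurableSet_Ioi).2 (Filter.Eventually.of_forall fun u hu =>
    posSemidefOn_gfbmSpectralIntegrand H b c (le_of_lt hu) _)

/-- The covariance function of the mgfBm is symmetric and positive semidefinite. -/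
theorem mgfBm_covariance_posSemidef (H a b c : ℝ) (hH : H ∈ Set.Ioo (0 : ℝ) 1)
    (C : ℝ → ℝ → ℝ)
    (hC : ∀ t s : ℝ,
      C t s = a ^ 2 * min t s + (b + c) ^ 2 / 2 * (t ^ (2 * H) + s ^ (2 * H))
        - b * c * (t + s) ^ (2 * H) - (b ^ 2 + c ^ 2) / 2 * |t - s| ^ (2 * H)) :
    (∀ t s : ℝ, 0 ≤ t → 0 ≤ s → C t s = C s t) ∧
    (∀ n : ℕ, ∀ t : Fin n → ℝ, (∀ i, 0 ≤ t i) → ∀ lam : Fin n → ℝ,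
      0 ≤ ∑ i, ∑ j, lam i * lam j * C (t i) (t j)) := by
  refine ⟨fun t s _ _ => by rw [hC, hC, min_comm, abs_sub_comm, add_comm t s]; ring, ?_⟩
  have hC' : C = fun t s =>
      a ^ 2 * gfbmCovariance (1 / 2) 1 0 t s + gfbmCovariance H b c t s := by
    ext t s
    rw [hC, gfbmCovariance_half_one_zero, gfbmCovariance]
    ring
  rw [hC']
  exact ((posSemidefOn_gfbmCovariance (by norm_num) 1 0).const_mul (sq_nonneg a)).add
    (posSemidefOn_gfbmCovariance hH b c)
end
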